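/- For every δ with 0 < δ ≤ erfc(1), one has erfc⁻¹(δ) ≤ √(ln(δ⁻¹) + ln(π)/2 − ln 2). Equivalently, since erfc is strictly decreasing on [0,∞), erfc(√(ln(δ⁻¹) + ln(π)/2 − ln 2)) ≤ δ for all 0 < δ ≤ erfc(1). -/

import Mathlib

open MeasureTheory Real Complex Set Function
open scoped ENNReal

noncomputable section

/-- The error function `erf x = (2/√π) ∫₀ˣ e^{-t²} dt`. -/
def erf' (x : ℝ) : ℝ := (2 / Real.sqrt Real.pi) * ∫ t in (0:ℝ)..x, Real.exp (-t^2)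

/-- The complementary error function `erfc x = 1 - erf x`. -/
def erfc' (x : ℝ) : ℝ := 1 - erf' x

/-- The inverse of the strictly decreasing bijection `erfc' : [0,∞) → (0,1]`. -/
def erfcInv (y : ℝ) : ℝ := Function.invFunOn erfc' (Set.Ici 0) y

/-- The spatial cutoff χ₀(x) = (1/2)[erf((x+3L/4)/σ) − erf((x−3L/4)/σ)]. -/
def chi0 (L σ x : ℝ) : ℝ := (1/2) * (erf' ((x + 3*L/4)/σ) - erf' ((x - 3*L/4)/σ))

/-- The frequency cutoff P₀(k) = (1/2)[erf(σ(k+3kmax/8)) − erf(σ(k−3kmax/8))]. -/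
def P0fun (kmax σ k : ℝ) : ℝ := (1/2) * (erf' (σ*(k + 3*kmax/8)) - erf' (σ*(k - 3*kmax/8)))

/-- The scaled spatial cutoff χₘ(x) = χ₀(2^{-m} x). -/
def chiSc (L σ : ℝ) (m : ℕ) (x : ℝ) : ℝ := chi0 L σ (x / 2^m)

/-- The scaled frequency cutoff Pₘ(k) = P₀(2^m k). -/
def PSc (kmax σ : ℝ) (m : ℕ) (k : ℝ) : ℝ := P0fun kmax σ (2^m * k)

/-- Fourier transform with the convention f̂(k) = (2π)^{-1/2} ∫ f(x) e^{-ikx} dx. -/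
def ft (f : ℝ → ℂ) (k : ℝ) : ℂ :=
  (Real.sqrt (2*Real.pi) : ℂ)⁻¹ * ∫ x : ℝ, Complex.exp (-(Complex.I * k * x)) * f x

/-- Inverse Fourier transform with the convention (2π)^{-1/2} ∫ g(k) e^{ikx} dk. -/
def ift (g : ℝ → ℂ) (x : ℝ) : ℂ :=
  (Real.sqrt (2*Real.pi) : ℂ)⁻¹ * ∫ k : ℝ, Complex.exp (Complex.I * k * x) * g k

/-- The space L²(ℝ, ℂ). -/
abbrev L2 := Lp ℂ 2 (volume : Measure ℝ)

/-- `T` is the bounded Fourier multiplier operator on L² with symbol `m`: on the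
dense set of `f ∈ L¹ ∩ L²` with integrable Fourier transform, `T f = 𝓕⁻¹(m·𝓕f)`.
(This uniquely determines `T` for a bounded symbol.) -/
def IsMultOp (m : ℝ → ℝ) (T : L2 →L[ℂ] L2) : Prop :=
  ∀ f : L2, Integrable (f : ℝ → ℂ) volume → Integrable (ft (f : ℝ → ℂ)) volume →
    (T f : ℝ → ℂ) =ᵐ[volume] ift (fun k => (m k : ℂ) * ft (f : ℝ → ℂ) k)

/-- `T` is the operator of pointwise multiplication by the real function `c`. -/
def IsMulBy (c : ℝ → ℝ) (T : L2 →L[ℂ] L2) : Prop :=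
  ∀ f : L2, (T f : ℝ → ℂ) =ᵐ[volume] fun x => (c x : ℂ) * f x

lemma gauss_integrable : Integrable (fun t : ℝ => Real.exp (-t^2)) := by
  have := integrable_exp_neg_mul_sq (b := 1) one_pos
  simpa using this

lemma gauss_Ioi_zero : ∫ t in Set.Ioi (0:ℝ), Real.exp (-t^2) = Real.sqrt Real.pi / 2 := by
  have := integral_gaussian_Ioi 1
  simpa using this

lemma erfc'_eq_Ioi {x : ℝ} (hx : 0 ≤ x) :
    erfc' x = (2 / Real.sqrt Real.pi) * ∫ t in Set.Ioi x, Real.exp (-t^2) := by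
  have hsplit : (∫ t in Set.Ioc (0:ℝ) x, Real.exp (-t^2))
      + ∫ t in Set.Ioi x, Real.exp (-t^2) = ∫ t in Set.Ioi (0:ℝ), Real.exp (-t^2) := by
    rw [← setIntegral_union]
    · rw [Set.Ioc_union_Ioi_eq_Ioi hx]
    · exact Set.Ioc_disjoint_Ioi le_rfl
    · exact measurableSet_Ioi
    · exact gauss_integrable.integrableOn
    · exact gauss_integrable.integrableOn
  have hiv : (∫ t in (0:ℝ)..x, Real.exp (-t^2)) = ∫ t in Set.Ioc (0:ℝ) x, Real.exp (-t^2) :=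
    intervalIntegral.integral_of_le hx
  have hπ : Real.sqrt Real.pi > 0 := Real.sqrt_pos.mpr Real.pi_pos
  rw [erfc', erf', hiv]
  have : (∫ t in Set.Ioc (0:ℝ) x, Real.exp (-t^2))
      = Real.sqrt Real.pi / 2 - ∫ t in Set.Ioi x, Real.exp (-t^2) := by
    rw [← gauss_Ioi_zero, ← hsplit]; ring
  rw [this]
  field_simp
  ring

lemma tgauss_integral {s : ℝ} (hs : 0 < s) :
    IntegrableOn (fun t : ℝ => t * Real.exp (-t^2)) (Set.Ioi s) ∧
    (∫ t in Set.Ioi s, t * Real.exp (-t^2)) = Real.exp (-s^2) / 2 := by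
  have hderiv : ∀ t ∈ Set.Ici s, HasDerivAt (fun t : ℝ => -Real.exp (-t^2)/2)
      (t * Real.exp (-t^2)) t := by
    intro t _
    have h1 : HasDerivAt (fun t : ℝ => -t^2) (-(2*t)) t := by
      exact (by simpa using (hasDerivAt_pow 2 t).neg : HasDerivAt (-fun x : ℝ => x^2) (-(2*t)) t)
    have h2 := (h1.exp).neg.div_const 2
    refine h2.congr_deriv ?_
    ring
  have hpos : ∀ t ∈ Set.Ioi s, 0 ≤ t * Real.exp (-t^2) := fun t ht =>
    mul_nonneg (le_of_lt (lt_trans hs ht)) (Real.exp_pos _).le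
  have htend : Filter.Tendsto (fun t : ℝ => -Real.exp (-t^2)/2) Filter.atTop (nhds 0) := by
    have h0 : Filter.Tendsto (fun t : ℝ => -t^2) Filter.atTop Filter.atBot := by
      apply Filter.tendsto_neg_atBot_iff.mpr
      exact Filter.tendsto_pow_atTop (by norm_num)
    have := (Real.tendsto_exp_atBot.comp h0).neg.div_const 2
    simpa using this
  have hint := integrableOn_Ioi_deriv_of_nonneg' hderiv hpos htend
  refine ⟨hint, ?_⟩
  have := integral_Ioi_of_hasDerivAt_of_tendsto
    ((hderiv s Set.self_mem_Ici).continuousAt.continuousWithinAt)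
    (fun t ht => hderiv t (Set.mem_Ici.mpr (le_of_lt ht))) hint htend
  rw [this]; ring

lemma erfc'_le {s : ℝ} (hs : 0 < s) :
    erfc' s ≤ Real.exp (-s^2) / (s * Real.sqrt Real.pi) := by
  have hπ : (0:ℝ) < Real.sqrt Real.pi := Real.sqrt_pos.mpr Real.pi_pos
  rw [erfc'_eq_Ioi hs.le]
  have hmono : (∫ t in Set.Ioi s, Real.exp (-t^2))
      ≤ (1/s) * ∫ t in Set.Ioi s, t * Real.exp (-t^2) := by
    rw [← integral_const_mul]
    apply setIntegral_mono_on gauss_integrable.integrableOn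
      (((tgauss_integral hs).1).const_mul _) measurableSet_Ioi
    intro t ht
    have hts : s ≤ t := (le_of_lt ht)
    rw [← mul_assoc]
    nth_rewrite 1 [← one_mul (Real.exp (-t^2))]
    apply mul_le_mul_of_nonneg_right _ (Real.exp_pos _).le
    rw [one_div]
    rw [inv_mul_eq_div, le_div_iff₀ hs]
    linarith
  rw [(tgauss_integral hs).2] at hmono
  calc (2 / Real.sqrt Real.pi) * ∫ t in Set.Ioi s, Real.exp (-t^2)
      ≤ (2 / Real.sqrt Real.pi) * ((1/s) * (Real.exp (-s^2) / 2)) := by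
        apply mul_le_mul_of_nonneg_left hmono (by positivity)
    _ = Real.exp (-s^2) / (s * Real.sqrt Real.pi) := by
        field_simp

/-- erfc⁻¹(δ) ≤ √(ln δ⁻¹ + ln π / 2 − ln 2) for 0 < δ ≤ erfc(1); equivalently,
erfc(√(ln δ⁻¹ + ln π / 2 − ln 2)) ≤ δ. -/
theorem stmt12 (δ : ℝ) (hδpos : 0 < δ) (hδle : δ ≤ erfc' 1) :
    erfcInv δ ≤ Real.sqrt (Real.log δ⁻¹ + Real.log Real.pi / 2 - Real.log 2) ∧
    erfc' (Real.sqrt (Real.log δ⁻¹ + Real.log Real.pi / 2 - Real.log 2)) ≤ δ := by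
  have hπ : (0:ℝ) < Real.sqrt Real.pi := Real.sqrt_pos.mpr Real.pi_pos
  set E := Real.log δ⁻¹ + Real.log Real.pi / 2 - Real.log 2 with hE
  -- bound on erfc' 1 and hence on log δ⁻¹
  have h1 : erfc' 1 ≤ Real.exp (-1) / Real.sqrt Real.pi := by
    have := erfc'_le (s := 1) one_pos
    simpa using this
  have hδ1 : δ ≤ Real.exp (-1) / Real.sqrt Real.pi := le_trans hδle h1
  have hlog : 1 + Real.log Real.pi / 2 ≤ Real.log δ⁻¹ := by
    have h2 : Real.log δ ≤ Real.log (Real.exp (-1) / Real.sqrt Real.pi) :=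
      Real.log_le_log hδpos hδ1
    rw [Real.log_div (Real.exp_ne_zero _) (ne_of_gt hπ), Real.log_exp,
      Real.log_sqrt Real.pi_pos.le] at h2
    rw [Real.log_inv]
    linarith
  have hE1 : 1 ≤ E := by
    have hlog2 : Real.log 2 ≤ Real.log Real.pi :=
      Real.log_le_log two_pos (by linarith [Real.pi_gt_three])
    rw [hE]; linarith
  have hE0 : 0 ≤ E := by linarith
  set s := Real.sqrt E with hsdef
  have hs1 : 1 ≤ s := by
    rw [hsdef, show (1:ℝ) = Real.sqrt 1 by simp]
    exact Real.sqrt_le_sqrt hE1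
  have hs0 : 0 < s := lt_of_lt_of_le one_pos hs1
  have hsq : s^2 = E := Real.sq_sqrt hE0
  -- exp (-E) = 2δ/√π
  have hexp : Real.exp (-E) = 2 * δ / Real.sqrt Real.pi := by
    rw [hE]
    rw [show -(Real.log δ⁻¹ + Real.log Real.pi / 2 - Real.log 2)
        = Real.log δ + Real.log 2 - Real.log Real.pi / 2 by
      rw [Real.log_inv]; ring]
    rw [Real.exp_sub, Real.exp_add, Real.exp_log hδpos, Real.exp_log two_pos]
    rw [show Real.log Real.pi / 2 = Real.log (Real.sqrt Real.pi) by
      rw [Real.log_sqrt Real.pi_pos.le]]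
    rw [Real.exp_log hπ]
    ring
  -- part 2
  have key : erfc' s ≤ δ := by
    have := erfc'_le hs0
    rw [hsq, hexp] at this
    calc erfc' s ≤ 2 * δ / Real.sqrt Real.pi / (s * Real.sqrt Real.pi) := this
      _ = (2 / (s * Real.pi)) * δ := by
          rw [div_div]
          rw [show Real.sqrt Real.pi * (s * Real.sqrt Real.pi)
            = s * Real.pi by rw [show Real.sqrt Real.pi * (s * Real.sqrt Real.pi)
              = s * (Real.sqrt Real.pi * Real.sqrt Real.pi) by ring,
              Real.mul_self_sqrt Real.pi_pos.le]]
          ring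
      _ ≤ 1 * δ := by
          apply mul_le_mul_of_nonneg_right _ hδpos.le
          rw [div_le_one (by positivity)]
          nlinarith [Real.pi_gt_three]
      _ = δ := one_mul δ
  refine ⟨?_, key⟩
  -- part 1: erfcInv δ ≤ s
  have herf_cont : Continuous erf' := by
    apply Continuous.mul continuous_const
    exact intervalIntegral.continuous_primitive (fun a b => gauss_integrable.intervalIntegrable) 0
  have hcont : Continuous erfc' := continuous_const.sub herf_cont
  have herfc0 : erfc' 0 = 1 := by simp [erfc', erf']
  -- δ is attained on [0, s]
  have hmem : δ ∈ erfc' '' Set.Icc 0 s := by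
    apply intermediate_value_Icc' hs0.le hcont.continuousOn
    exact ⟨key, by rw [herfc0]; exact le_trans hδle (by
      -- erfc' 1 ≤ 1 since erf' 1 ≥ 0
      have : 0 ≤ erf' 1 := by
        rw [erf']
        apply mul_nonneg (by positivity)
        apply intervalIntegral.integral_nonneg zero_le_one
        intro t _; exact (Real.exp_pos _).le
      rw [erfc']; linarith)⟩
  obtain ⟨x₀, hx₀, hfx₀⟩ := hmem
  have hex : ∃ a ∈ Set.Ici (0:ℝ), erfc' a = δ := ⟨x₀, hx₀.1, hfx₀⟩
  have hinv_eq : erfc' (erfcInv δ) = δ := Function.invFunOn_eq hex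
  have hinv_mem : erfcInv δ ∈ Set.Ici (0:ℝ) := Function.invFunOn_mem hex
  -- erfc' strictly anti
  have hanti : StrictAnti erfc' := by
    intro a b hab
    rw [erfc', erfc', sub_lt_sub_iff_left]
    rw [erf', erf']
    apply mul_lt_mul_of_pos_left _ (by positivity)
    have hadd := intervalIntegral.integral_add_adjacent_intervals (a := (0:ℝ)) (b := a) (c := b)
      (gauss_integrable.intervalIntegrable) (gauss_integrable.intervalIntegrable)
    have hpos : 0 < ∫ t in a..b, Real.exp (-t^2) :=
      intervalIntegral.intervalIntegral_pos_of_pos_on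
        (gauss_integrable.intervalIntegrable) (fun t _ => Real.exp_pos _) hab
    linarith
  by_contra hlt
  push_neg at hlt
  have hcontr := hanti hlt
  rw [hinv_eq] at hcontr
  linarith

end
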